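/- Let ρ : [0,1] → [0,1] be continuous and nondecreasing, t_k = ρ(k/m) for 1 ≤ k ≤ m, and λ ∈ {1,…,m}. Fix ζ ∈ (0,1), δ ∈ (0,1), and define G^{DU}_ζ(x) = (1−ζ) + ζx, u⁺_δ = U(λ/m, (G^{DU}_ζ + δ) ∧ 1) and u⁻_δ = U(λ/m, (G^{DU}_ζ − δ) ∨ 0). Let k ∈ {1,…,m} and let p_1,…,p_m ∈ [0,1] be such that p_i = 0 for all i > k. Let Ĝ_k(x) = k^{-1} Σ_{i=1}^{k} 1{p_i ≤ x}, and let ν ∈ [0,1] satisfy |k/m − ζ| ≤ ν. If sup_{x ∈ [0,1]} |Ĝ_k(x) − x| ≤ ζ^{-1}(δ − ν − 1/m), then the step-up-down index k̂ of order λ satisfies u⁻_δ ≤ k̂/m ≤ u⁺_δ. -/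

import Mathlib

open MeasureTheory ProbabilityTheory Filter
open scoped ENNReal

noncomputable section

/-- The number of indices `i` with `p i ≤ x` (the p-values are `p 0, …, p (m-1)`). -/
def numLe {m : ℕ} (p : Fin m → ℝ) (x : ℝ) : ℕ :=
  Set.ncard {i : Fin m | p i ≤ x}

/-- The number of indices `i` among the true nulls (the first `m0` coordinates)
with `p i ≤ x`. -/
def numLeNull {m : ℕ} (m0 : ℕ) (p : Fin m → ℝ) (x : ℝ) : ℕ :=
  Set.ncard {i : Fin m | (i : ℕ) < m0 ∧ p i ≤ x}

/-- The step-up-down index `k̂` of order `lam` for the threshold collection `t`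
(the condition "`p_(k) ≤ t k`" on the `k`-th order statistic, with the conventions
`p_(0) = 0` and `t 0 = 0`, is encoded as `k ≤ numLe p (t k)`). -/
def sudIndex (lam : ℕ) (t : ℕ → ℝ) {m : ℕ} (p : Fin m → ℝ) : ℕ :=
  if lam ≤ numLe p (t lam) then
    sSup {k | k ≤ m ∧ ∀ k', lam ≤ k' → k' ≤ k → k' ≤ numLe p (t k')}
  else
    sSup {k | k ≤ lam ∧ k ≤ numLe p (t k)}

/-- The number of rejections of the procedure `SUD_lam(t)`: hypothesis `i` is rejected
iff `p i ≤ t k̂`. -/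
def sudNumRej (lam : ℕ) (t : ℕ → ℝ) {m : ℕ} (p : Fin m → ℝ) : ℕ :=
  numLe p (t (sudIndex lam t p))

/-- The number of erroneous rejections (type I errors) of `SUD_lam(t)` when the true
nulls are the first `m0` hypotheses. -/
def sudNumFalseRej (m0 lam : ℕ) (t : ℕ → ℝ) {m : ℕ} (p : Fin m → ℝ) : ℕ :=
  numLeNull m0 p (t (sudIndex lam t p))

/-- The false discovery proportion of `SUD_lam(t)`. -/
def sudFDP (m0 lam : ℕ) (t : ℕ → ℝ) {m : ℕ} (p : Fin m → ℝ) : ℝ :=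
  (sudNumFalseRej m0 lam t p : ℝ) / max (sudNumRej lam t p : ℝ) 1

/-- The false discovery rate of `SUD_lam(t)` (fixed number `m0` of true nulls). -/
def sudFDR {Ω : Type*} [MeasurableSpace Ω] (P : Measure Ω) (m0 lam : ℕ) (t : ℕ → ℝ)
    {m : ℕ} (p : Ω → Fin m → ℝ) : ℝ :=
  ∫ ω, sudFDP m0 lam t (p ω) ∂P

/-- The false discovery rate of `SUD_lam(t)` with a random number `M0` of true nulls. -/
def sudFDRrm {Ω : Type*} [MeasurableSpace Ω] (P : Measure Ω) (M0 : Ω → ℕ) (lam : ℕ)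
    (t : ℕ → ℝ) {m : ℕ} (p : Ω → Fin m → ℝ) : ℝ :=
  ∫ ω, sudFDP (M0 ω) lam t (p ω) ∂P

/-- A continuous c.d.f. on `[0,1]` (the class `𝓕`). -/
def IsCDF (F : ℝ → ℝ) : Prop :=
  ContinuousOn F (Set.Icc 0 1) ∧ MonotoneOn F (Set.Icc 0 1) ∧
    (∀ x ∈ Set.Icc (0:ℝ) 1, F x ∈ Set.Icc (0:ℝ) 1) ∧ F 1 = 1

/-- A (not necessarily continuous) c.d.f. on `[0,1]`. -/
def IsCDFw (F : ℝ → ℝ) : Prop :=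
  MonotoneOn F (Set.Icc 0 1) ∧ (∀ x ∈ Set.Icc (0:ℝ) 1, F x ∈ Set.Icc (0:ℝ) 1) ∧ F 1 = 1

/-- `μ` is a probability distribution on `[0,1]` with c.d.f. `F`. -/
def HasCDF (μ : Measure ℝ) (F : ℝ → ℝ) : Prop :=
  IsProbabilityMeasure μ ∧ μ (Set.Iio 0) = 0 ∧
    ∀ x ∈ Set.Icc (0:ℝ) 1, μ (Set.Iic x) = ENNReal.ofReal (F x)

/-- The fixed (two-group) mixture model `FM(m, m0, F)`: the p-values
`p · 0, …, p · (m-1)` are mutually independent, `[0,1]`-valued, the first `m0` of them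
(the true nulls) are uniform on `(0,1)` and the remaining ones have c.d.f. `F`.
The Dirac-uniform configuration `DU(m, m0)` is the case `F ≡ 1`. -/
def IsFM {Ω : Type*} [MeasurableSpace Ω] (P : Measure Ω) (m m0 : ℕ) (F : ℝ → ℝ)
    (p : Ω → Fin m → ℝ) : Prop :=
  IsProbabilityMeasure P ∧ (∀ i, Measurable fun ω => p ω i) ∧
    iIndepFun (fun i ω => p ω i) P ∧
    (∀ ω i, p ω i ∈ Set.Icc (0:ℝ) 1) ∧
    (∀ i : Fin m, (i : ℕ) < m0 → ∀ x ∈ Set.Icc (0:ℝ) 1,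
      P {ω | p ω i ≤ x} = ENNReal.ofReal x) ∧
    (∀ i : Fin m, m0 ≤ (i : ℕ) → ∀ x ∈ Set.Icc (0:ℝ) 1,
      P {ω | p ω i ≤ x} = ENNReal.ofReal (F x))

/-- The random (two-group) mixture model `RM(m, π0, F)`: the (unobserved) number `M0`
of true nulls is binomial `B(m, π0)` and, conditionally on `M0 = k`, the p-values
follow the fixed mixture model `FM(m, k, F)`. -/
def IsRM {Ω : Type*} [MeasurableSpace Ω] (P : Measure Ω) (m : ℕ) (pi0 : ℝ) (F : ℝ → ℝ)
    (p : Ω → Fin m → ℝ) (M0 : Ω → ℕ) : Prop :=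
  IsProbabilityMeasure P ∧ Measurable M0 ∧
    (∀ k : ℕ, P {ω | M0 ω = k} =
      ENNReal.ofReal ((m.choose k : ℝ) * pi0 ^ k * (1 - pi0) ^ (m - k))) ∧
    (∀ k ≤ m, P {ω | M0 ω = k} ≠ 0 → IsFM (P[|{ω | M0 ω = k}]) m k F p)

/-- The quantity `𝒰(t0, G)` associated with the critical value function `ρ`. -/
def Ufix (ρ : ℝ → ℝ) (t0 : ℝ) (G : ℝ → ℝ) : ℝ :=
  if t0 ≤ G (ρ t0) then sInf {u | u ∈ Set.Icc t0 1 ∧ G (ρ u) ≤ u}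
  else sSup {u | u ∈ Set.Icc 0 t0 ∧ u ≤ G (ρ u)}

/-- `u⁺_δ = 𝒰(l, (G^{DU}_ζ + δ) ∧ 1)` where `G^{DU}_ζ(x) = (1-ζ) + ζx`. -/
def uPlusDU (ρ : ℝ → ℝ) (l ζ δ : ℝ) : ℝ :=
  Ufix ρ l fun x => min ((1 - ζ) + ζ * x + δ) 1

/-- `u⁻_δ = 𝒰(l, (G^{DU}_ζ - δ) ∨ 0)` where `G^{DU}_ζ(x) = (1-ζ) + ζx`. -/
def uMinusDU (ρ : ℝ → ℝ) (l ζ δ : ℝ) : ℝ :=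
  Ufix ρ l fun x => max ((1 - ζ) + ζ * x - δ) 0

/-- The remainder term `ε(δ, m, ζ, y)`. -/
def epsBound (ρ : ℝ → ℝ) (l δ : ℝ) (m : ℕ) (ζ y : ℝ) : ℝ :=
  (ρ (uPlusDU ρ l ζ δ) - ρ (uMinusDU ρ l ζ δ)) / uPlusDU ρ l ζ δ +
    4 / (1 - ζ) *
      Real.exp (-2 * m * max (δ - y - 1 / m) 0 ^ 2 * max (1 - y / ζ) 0)

/-- The uniform distribution on `(0,1)`. -/
def unifMeasure : Measure ℝ := volume.restrict (Set.Ioo 0 1)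

/-- `Ψ_{k,k0,F}(s 1, …, s k) = P(U_(1) ≤ s 1, …, U_(k) ≤ s k)`, where
`U_1, …, U_{k0}` are i.i.d. uniform on `(0,1)`, independent of `U_{k0+1}, …, U_k`
which are i.i.d. with distribution `μ` (of c.d.f. `F`); the condition
"`U_(j) ≤ s j`" on the `j`-th order statistic is encoded as `j ≤ numLe U (s j)`. -/
def Psi (k k0 : ℕ) (μ : Measure ℝ) (s : ℕ → ℝ) : ℝ :=
  ((Measure.pi fun i : Fin k => if (i : ℕ) < k0 then unifMeasure else μ)
    {U : Fin k → ℝ | ∀ j : ℕ, 1 ≤ j → j ≤ k → j ≤ numLe U (s j)}).toReal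

/-- The one-population quantity `Ψ_k(s 1, …, s k)` (all variables uniform). -/
def Psi1 (k : ℕ) (s : ℕ → ℝ) : ℝ := Psi k k unifMeasure s

/-- The quantity `𝒬_{m,m0,F}(s, k, j)`, where `ν` is a distribution with
c.d.f. `F̄(u) = 1 - F(1-u)`. -/
def Qcal (m m0 : ℕ) (F : ℝ → ℝ) (ν : Measure ℝ) (s : ℕ → ℝ) (k j : ℕ) : ℝ :=
  (m0.choose j : ℝ) * ((m - m0).choose (k - j) : ℝ) * s k ^ j * F (s k) ^ (k - j) *
    Psi (m - k) (m0 - j) ν fun i => 1 - s (m + 1 - i)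

/-- The quantity `𝒬̃_{m,m0,F}(s, k, j)`, where `μ` is a distribution with c.d.f. `F`. -/
def Qtild (m m0 : ℕ) (F : ℝ → ℝ) (μ : Measure ℝ) (s : ℕ → ℝ) (k j : ℕ) : ℝ :=
  (m0.choose j : ℝ) * ((m - m0).choose (k - j) : ℝ) * (1 - s (k + 1)) ^ (m0 - j) *
    (1 - F (s (k + 1))) ^ ((m - m0) - (k - j)) * Psi k j μ s

/-- The quantity `𝒫_{m,π0,F}(s, k, j)` (with `G = π0 · id + (1-π0) F`). -/
def Pcal (m : ℕ) (pi0 : ℝ) (F : ℝ → ℝ) (s : ℕ → ℝ) (k j : ℕ) : ℝ :=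
  (m.choose j : ℝ) * ((m - j).choose (k - j) : ℝ) * pi0 ^ j * (1 - pi0) ^ (k - j) *
    s k ^ j * F (s k) ^ (k - j) *
    Psi1 (m - k) fun i => 1 - (pi0 * s (m + 1 - i) + (1 - pi0) * F (s (m + 1 - i)))

/-- The quantity `𝒫̃_{m,π0,F}(s, k, j)`, where `μ` is a distribution with c.d.f. `F`. -/
def Ptild (m : ℕ) (pi0 : ℝ) (F : ℝ → ℝ) (μ : Measure ℝ) (s : ℕ → ℝ) (k j : ℕ) : ℝ :=
  (m.choose j : ℝ) * ((m - j).choose (k - j) : ℝ) * pi0 ^ j * (1 - pi0) ^ (k - j) *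
    (1 - (pi0 * s (k + 1) + (1 - pi0) * F (s (k + 1)))) ^ (m - k) * Psi k j μ s

/-! On the Dirac-uniform realization the count process `N(x) = #{i | p i ≤ x}` equals
`k Ĝ_k(x) + (m - k)`, so the closeness of `Ĝ_k` to the identity traps `N` in the band
`|N(x) - m G^{DU}_ζ(x)| ≤ mδ - 1`. The index `k̂` is a crossing of `j ↦ N(t_j) - j` on the grid,
next to `λ`, and such a crossing is squeezed between the crossings of `u ↦ G^{DU}_ζ(ρ u) ± δ - u`
that define `u^±_δ`: the unit slack of the band absorbs the rounding `⌊m u⌋`, `⌈m u⌉` between a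
real crossing and a grid point. -/

open Set

section Ufix

variable {ρ G : ℝ → ℝ} {t0 : ℝ}

theorem isLeast_Ufix (h : t0 ≤ G (ρ t0)) (hcont : ContinuousOn (fun u => G (ρ u)) (Icc t0 1))
    (hne : ∃ u ∈ Icc t0 1, G (ρ u) ≤ u) :
    IsLeast {u | u ∈ Icc t0 1 ∧ G (ρ u) ≤ u} (Ufix ρ t0 G) := by
  rw [Ufix, if_pos h]
  exact (isClosed_Icc.isClosed_le hcont continuousOn_id).isLeast_csInf hne
    ⟨t0, fun u hu => hu.1.1⟩

theorem isGreatest_Ufix (h : ¬t0 ≤ G (ρ t0)) (hcont : ContinuousOn (fun u => G (ρ u)) (Icc 0 t0))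
    (hne : ∃ u ∈ Icc 0 t0, u ≤ G (ρ u)) :
    IsGreatest {u | u ∈ Icc 0 t0 ∧ u ≤ G (ρ u)} (Ufix ρ t0 G) := by
  rw [Ufix, if_neg h]
  exact (isClosed_Icc.isClosed_le continuousOn_id hcont).isGreatest_csSup hne
    ⟨t0, fun u hu => hu.1.2⟩

end Ufix

section sudIndex

variable {lam m : ℕ} {t : ℕ → ℝ} {p : Fin m → ℝ}

theorem le_sudIndex_of_stepDown (h : lam ≤ numLe p (t lam)) {j : ℕ} (hj : j ≤ m)
    (hrej : ∀ j', lam ≤ j' → j' ≤ j → j' ≤ numLe p (t j')) : j ≤ sudIndex lam t p := by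
  rw [sudIndex, if_pos h]
  exact le_csSup ⟨m, fun _ hk => hk.1⟩ ⟨hj, hrej⟩

theorem le_numLe_of_stepDown (h : lam ≤ numLe p (t lam)) (hlam : lam ≤ m) {j : ℕ}
    (hj : lam ≤ j) (hjk : j ≤ sudIndex lam t p) : j ≤ numLe p (t j) := by
  rw [sudIndex, if_pos h] at hjk
  have hmem := Nat.sSup_mem (s := {k | k ≤ m ∧ ∀ k', lam ≤ k' → k' ≤ k → k' ≤ numLe p (t k')})
    ⟨lam, hlam, fun k' h1 h2 => le_antisymm h2 h1 ▸ h⟩ ⟨m, fun _ hk => hk.1⟩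
  exact hmem.2 j hj hjk

theorem le_sudIndex_of_stepUp (h : ¬lam ≤ numLe p (t lam)) {j : ℕ} (hj : j ≤ lam)
    (hrej : j ≤ numLe p (t j)) : j ≤ sudIndex lam t p := by
  rw [sudIndex, if_neg h]
  exact le_csSup ⟨lam, fun _ hk => hk.1⟩ ⟨hj, hrej⟩

theorem sudIndex_mem_of_stepUp (h : ¬lam ≤ numLe p (t lam)) :
    sudIndex lam t p ≤ lam ∧ sudIndex lam t p ≤ numLe p (t (sudIndex lam t p)) := by
  rw [sudIndex, if_neg h]
  exact Nat.sSup_mem (s := {k | k ≤ lam ∧ k ≤ numLe p (t k)}) ⟨0, Nat.zero_le _, Nat.zero_le _⟩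
    ⟨lam, fun _ hk => hk.1⟩

theorem sudIndex_le_of_stepDown (h : lam ≤ numLe p (t lam)) : sudIndex lam t p ≤ m := by
  rw [sudIndex, if_pos h]
  exact csSup_le' fun _ hk => hk.1

end sudIndex

section Comparison

variable {m lam : ℕ} {ρ g : ℝ → ℝ} {p : Fin m → ℝ}

theorem natCast_div_mem_Icc {j : ℕ} (hj : j ≤ m) : (j : ℝ) / m ∈ Icc (0 : ℝ) 1 :=
  ⟨by positivity, div_le_one_of_le₀ (by exact_mod_cast hj) (by positivity)⟩

theorem numLe_le (x : ℝ) : numLe p x ≤ m := by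
  simpa [numLe] using Set.ncard_le_card {i | p i ≤ x}

theorem add_one_le_mul_of_le_numLe (hρmap : MapsTo ρ (Icc 0 1) (Icc 0 1))
    (hN : ∀ x ∈ Icc (0 : ℝ) 1, (numLe p x : ℝ) + 1 ≤ m * g x) {j : ℕ} (hj : j ≤ m)
    (hrej : j ≤ numLe p (ρ ((j : ℝ) / m))) : (j : ℝ) + 1 ≤ m * g (ρ ((j : ℝ) / m)) :=
  le_trans (by exact_mod_cast Nat.add_le_add_right hrej 1) (hN _ (hρmap (natCast_div_mem_Icc hj)))

theorem le_numLe_of_le_mul_add_one (hρmap : MapsTo ρ (Icc 0 1) (Icc 0 1))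
    (hN : ∀ x ∈ Icc (0 : ℝ) 1, (m : ℝ) * g x + 1 ≤ numLe p x) {j : ℕ} (hj : j ≤ m)
    (hle : (j : ℝ) ≤ m * g (ρ ((j : ℝ) / m)) + 1) : j ≤ numLe p (ρ ((j : ℝ) / m)) := by
  exact_mod_cast hle.trans (hN _ (hρmap (natCast_div_mem_Icc hj)))

theorem sudIndex_div_le_Ufix_min_of_stepDown (hm : 0 < m) (hlam : lam ≤ m)
    (hρcont : ContinuousOn ρ (Icc 0 1)) (hρmono : MonotoneOn ρ (Icc 0 1))
    (hρmap : MapsTo ρ (Icc 0 1) (Icc 0 1)) (hg : Continuous g) (hgm : Monotone g)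
    (hN : ∀ x ∈ Icc (0 : ℝ) 1, (numLe p x : ℝ) + 1 ≤ m * g x)
    (h : lam ≤ numLe p (ρ ((lam : ℝ) / m))) :
    (sudIndex lam (fun j => ρ ((j : ℝ) / m)) p : ℝ) / m ≤
      Ufix ρ ((lam : ℝ) / m) fun x => min (g x) 1 := by
  set kh := sudIndex lam (fun j => ρ ((j : ℝ) / m)) p
  have hm' : (0 : ℝ) < m := by exact_mod_cast hm
  have hl := natCast_div_mem_Icc (m := m) hlam
  have hlG : (lam : ℝ) / m ≤ min (g (ρ ((lam : ℝ) / m))) 1 := by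
    refine le_min ?_ hl.2
    rw [div_le_iff₀ hm']
    linarith [add_one_le_mul_of_le_numLe hρmap hN hlam h]
  have hcont : ContinuousOn (fun u => min (g (ρ u)) 1) (Icc ((lam : ℝ) / m) 1) :=
    ((hg.min continuous_const).comp_continuousOn hρcont).mono (Icc_subset_Icc hl.1 le_rfl)
  obtain ⟨⟨⟨hlU, hU1⟩, hGU⟩, -⟩ :=
    isLeast_Ufix (G := fun x => min (g x) 1) hlG hcont ⟨1, ⟨hl.2, le_rfl⟩, min_le_right _ _⟩
  set U := Ufix ρ ((lam : ℝ) / m) fun x => min (g x) 1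
  rcases min_le_iff.mp hGU with hgU | h1U
  · have hmU : 0 ≤ (m : ℝ) * U := mul_nonneg hm'.le (hl.1.trans hlU)
    set j := ⌊(m : ℝ) * U⌋₊
    have hjU : (j : ℝ) ≤ m * U := Nat.floor_le hmU
    have hjm : j ≤ m := by
      exact_mod_cast hjU.trans (mul_le_of_le_one_right (Nat.cast_nonneg m) hU1)
    have hlamj : lam ≤ j := Nat.le_floor (by rwa [div_le_iff₀' hm'] at hlU)
    -- rejecting `j` would give `j + 1 ≤ m g(t_j) ≤ m g(ρ U) ≤ m U < j + 1`
    have hnrej : ¬j ≤ numLe p (ρ ((j : ℝ) / m)) := fun hrej => by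
      have hjU' : (j : ℝ) / m ≤ U := by rwa [div_le_iff₀' hm']
      have hgj : g (ρ ((j : ℝ) / m)) ≤ g (ρ U) :=
        hgm (hρmono (natCast_div_mem_Icc hjm) ⟨hl.1.trans hlU, hU1⟩ hjU')
      nlinarith [add_one_le_mul_of_le_numLe hρmap hN hjm hrej, Nat.lt_floor_add_one ((m : ℝ) * U)]
    have hkhj : kh < j := by
      by_contra! hjkh
      exact hnrej (le_numLe_of_stepDown h hlam hlamj hjkh)
    rw [div_le_iff₀ hm']
    have : (kh : ℝ) < j := by exact_mod_cast hkhj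
    linarith
  · exact (natCast_div_mem_Icc (sudIndex_le_of_stepDown h)).2.trans h1U

theorem sudIndex_div_le_Ufix_min_of_stepUp (hm : 0 < m) (hlam : lam ≤ m)
    (hρcont : ContinuousOn ρ (Icc 0 1)) (hρmap : MapsTo ρ (Icc 0 1) (Icc 0 1))
    (hg : Continuous g) (hN : ∀ x ∈ Icc (0 : ℝ) 1, (numLe p x : ℝ) + 1 ≤ m * g x)
    (h : ¬lam ≤ numLe p (ρ ((lam : ℝ) / m))) :
    (sudIndex lam (fun j => ρ ((j : ℝ) / m)) p : ℝ) / m ≤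
      Ufix ρ ((lam : ℝ) / m) fun x => min (g x) 1 := by
  set kh := sudIndex lam (fun j => ρ ((j : ℝ) / m)) p
  have hm' : (0 : ℝ) < m := by exact_mod_cast hm
  have hl := natCast_div_mem_Icc (m := m) hlam
  obtain ⟨hkhlam, hrej⟩ := sudIndex_mem_of_stepUp (t := fun j => ρ ((j : ℝ) / m)) h
  have hkh := natCast_div_mem_Icc (hkhlam.trans hlam)
  have hkhl : (kh : ℝ) / m ≤ (lam : ℝ) / m := by gcongr
  have hcont : ContinuousOn (fun u => min (g (ρ u)) 1) (Icc 0 1) :=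
    (hg.min continuous_const).comp_continuousOn hρcont
  by_cases hlG : (lam : ℝ) / m ≤ min (g (ρ ((lam : ℝ) / m))) 1
  · exact hkhl.trans (isLeast_Ufix (G := fun x => min (g x) 1) hlG
      (hcont.mono (Icc_subset_Icc hl.1 le_rfl)) ⟨1, ⟨hl.2, le_rfl⟩, min_le_right _ _⟩).1.1.1
  · have hmem : (kh : ℝ) / m ∈ {u | u ∈ Icc 0 ((lam : ℝ) / m) ∧ u ≤ min (g (ρ u)) 1} := by
      refine ⟨⟨hkh.1, hkhl⟩, le_min ?_ hkh.2⟩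
      rw [div_le_iff₀ hm']
      linarith [add_one_le_mul_of_le_numLe hρmap hN (hkhlam.trans hlam) hrej]
    exact (isGreatest_Ufix (G := fun x => min (g x) 1) hlG
      (hcont.mono (Icc_subset_Icc le_rfl hl.2)) ⟨_, hmem⟩).2 hmem

theorem Ufix_max_le_sudIndex_div_of_stepDown (hm : 0 < m) (hlam : lam ≤ m)
    (hρcont : ContinuousOn ρ (Icc 0 1)) (hρmono : MonotoneOn ρ (Icc 0 1))
    (hρmap : MapsTo ρ (Icc 0 1) (Icc 0 1)) (hg : Continuous g) (hgm : Monotone g)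
    (hN : ∀ x ∈ Icc (0 : ℝ) 1, (m : ℝ) * g x + 1 ≤ numLe p x)
    (h : lam ≤ numLe p (ρ ((lam : ℝ) / m))) :
    (Ufix ρ ((lam : ℝ) / m) fun x => max (g x) 0) ≤
      (sudIndex lam (fun j => ρ ((j : ℝ) / m)) p : ℝ) / m := by
  set kh := sudIndex lam (fun j => ρ ((j : ℝ) / m)) p
  have hm' : (0 : ℝ) < m := by exact_mod_cast hm
  have hl := natCast_div_mem_Icc (m := m) hlam
  have hkh := natCast_div_mem_Icc (sudIndex_le_of_stepDown (t := fun j => ρ ((j : ℝ) / m)) h)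
  have hlamkh : lam ≤ kh :=
    le_sudIndex_of_stepDown h hlam fun j' h1 h2 => le_antisymm h2 h1 ▸ h
  have hlkh : (lam : ℝ) / m ≤ (kh : ℝ) / m := by gcongr
  have hcont : ContinuousOn (fun u => max (g (ρ u)) 0) (Icc 0 1) :=
    (hg.max continuous_const).comp_continuousOn hρcont
  by_cases hlG : (lam : ℝ) / m ≤ max (g (ρ ((lam : ℝ) / m))) 0
  · -- otherwise `kh + 1` would be rejected too, contradicting the maximality of `kh`
    have hgkh : m * g (ρ ((kh : ℝ) / m)) ≤ kh := by
      by_contra! hlt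
      have hkh1 : kh + 1 ≤ m := by
        have hNm : (numLe p (ρ ((kh : ℝ) / m)) : ℝ) ≤ m := by exact_mod_cast numLe_le _
        exact_mod_cast (by linarith [hN _ (hρmap hkh)] : (kh : ℝ) + 1 ≤ m)
      have hgkh1 : g (ρ ((kh : ℝ) / m)) ≤ g (ρ (((kh + 1 : ℕ) : ℝ) / m)) :=
        hgm (hρmono hkh (natCast_div_mem_Icc hkh1) (by gcongr; omega))
      have hrej : kh + 1 ≤ numLe p (ρ (((kh + 1 : ℕ) : ℝ) / m)) :=
        le_numLe_of_le_mul_add_one hρmap hN hkh1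
          (by linarith [mul_le_mul_of_nonneg_left hgkh1 hm'.le, Nat.cast_succ (R := ℝ) kh])
      have := le_sudIndex_of_stepDown h hkh1 fun j' h1 h2 => by
        rcases Nat.lt_or_ge j' (kh + 1) with hj' | hj'
        · exact le_numLe_of_stepDown h hlam h1 (Nat.lt_succ_iff.mp hj')
        · exact le_antisymm h2 hj' ▸ hrej
      omega
    have hmem : (kh : ℝ) / m ∈ {u | u ∈ Icc ((lam : ℝ) / m) 1 ∧ max (g (ρ u)) 0 ≤ u} := by
      refine ⟨⟨hlkh, hkh.2⟩, max_le ?_ hkh.1⟩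
      rwa [le_div_iff₀' hm']
    exact (isLeast_Ufix (G := fun x => max (g x) 0) hlG
      (hcont.mono (Icc_subset_Icc hl.1 le_rfl)) ⟨_, hmem⟩).2 hmem
  · exact ((isGreatest_Ufix (G := fun x => max (g x) 0) hlG
      (hcont.mono (Icc_subset_Icc le_rfl hl.2)) ⟨0, ⟨le_rfl, hl.1⟩, le_max_right _ _⟩).1.1.2).trans
      hlkh

theorem Ufix_max_le_sudIndex_div_of_stepUp (hm : 0 < m) (hlam : lam ≤ m)
    (hρcont : ContinuousOn ρ (Icc 0 1)) (hρmono : MonotoneOn ρ (Icc 0 1))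
    (hρmap : MapsTo ρ (Icc 0 1) (Icc 0 1)) (hg : Continuous g) (hgm : Monotone g)
    (hN : ∀ x ∈ Icc (0 : ℝ) 1, (m : ℝ) * g x + 1 ≤ numLe p x)
    (h : ¬lam ≤ numLe p (ρ ((lam : ℝ) / m))) :
    (Ufix ρ ((lam : ℝ) / m) fun x => max (g x) 0) ≤
      (sudIndex lam (fun j => ρ ((j : ℝ) / m)) p : ℝ) / m := by
  have hm' : (0 : ℝ) < m := by exact_mod_cast hm
  have hl := natCast_div_mem_Icc (m := m) hlam
  have hlG : ¬(lam : ℝ) / m ≤ max (g (ρ ((lam : ℝ) / m))) 0 := fun hlG => h <| by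
    rcases le_max_iff.mp hlG with hlg | hl0
    · exact le_numLe_of_le_mul_add_one hρmap hN hlam (by rw [div_le_iff₀' hm'] at hlg; linarith)
    · rw [div_le_iff₀ hm', zero_mul, Nat.cast_nonpos] at hl0
      exact hl0 ▸ Nat.zero_le _
  obtain ⟨⟨⟨hU0, hUl⟩, hUG⟩, -⟩ := isGreatest_Ufix (G := fun x => max (g x) 0) hlG
    (((hg.max continuous_const).comp_continuousOn hρcont).mono (Icc_subset_Icc le_rfl hl.2))
    ⟨0, ⟨le_rfl, hl.1⟩, le_max_right _ _⟩
  set U := Ufix ρ ((lam : ℝ) / m) fun x => max (g x) 0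
  rcases le_max_iff.mp hUG with hUg | hU0'
  · -- `j = ⌈m U⌉₊` satisfies `j < m U + 1 ≤ m g(ρ U) + 1 ≤ m g(t_j) + 1`, so it is rejected
    set j := ⌈(m : ℝ) * U⌉₊
    have hjU : (m : ℝ) * U ≤ j := Nat.le_ceil _
    have hjlam : j ≤ lam := Nat.ceil_le.mpr (by rwa [le_div_iff₀' hm'] at hUl)
    have hjm := hjlam.trans hlam
    have hgj : g (ρ U) ≤ g (ρ ((j : ℝ) / m)) :=
      hgm (hρmono ⟨hU0, hUl.trans hl.2⟩ (natCast_div_mem_Icc hjm) (by rwa [le_div_iff₀' hm']))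
    have hrej : j ≤ numLe p (ρ ((j : ℝ) / m)) :=
      le_numLe_of_le_mul_add_one hρmap hN hjm
        (by nlinarith [Nat.ceil_lt_add_one (mul_nonneg hm'.le hU0)])
    rw [le_div_iff₀' hm']
    exact hjU.trans (by exact_mod_cast le_sudIndex_of_stepUp h hjlam hrej)
  · exact hU0'.trans (by positivity)

theorem Ufix_max_le_sudIndex_div (hm : 0 < m) (hlam : lam ≤ m)
    (hρcont : ContinuousOn ρ (Icc 0 1)) (hρmono : MonotoneOn ρ (Icc 0 1))
    (hρmap : MapsTo ρ (Icc 0 1) (Icc 0 1)) (hg : Continuous g) (hgm : Monotone g)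
    (hN : ∀ x ∈ Icc (0 : ℝ) 1, (m : ℝ) * g x + 1 ≤ numLe p x) :
    (Ufix ρ ((lam : ℝ) / m) fun x => max (g x) 0) ≤
      (sudIndex lam (fun j => ρ ((j : ℝ) / m)) p : ℝ) / m := by
  by_cases h : lam ≤ numLe p (ρ ((lam : ℝ) / m))
  · exact Ufix_max_le_sudIndex_div_of_stepDown hm hlam hρcont hρmono hρmap hg hgm hN h
  · exact Ufix_max_le_sudIndex_div_of_stepUp hm hlam hρcont hρmono hρmap hg hgm hN h

theorem sudIndex_div_le_Ufix_min (hm : 0 < m) (hlam : lam ≤ m)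
    (hρcont : ContinuousOn ρ (Icc 0 1)) (hρmono : MonotoneOn ρ (Icc 0 1))
    (hρmap : MapsTo ρ (Icc 0 1) (Icc 0 1)) (hg : Continuous g) (hgm : Monotone g)
    (hN : ∀ x ∈ Icc (0 : ℝ) 1, (numLe p x : ℝ) + 1 ≤ m * g x) :
    (sudIndex lam (fun j => ρ ((j : ℝ) / m)) p : ℝ) / m ≤
      Ufix ρ ((lam : ℝ) / m) fun x => min (g x) 1 := by
  by_cases h : lam ≤ numLe p (ρ ((lam : ℝ) / m))
  · exact sudIndex_div_le_Ufix_min_of_stepDown hm hlam hρcont hρmono hρmap hg hgm hN h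
  · exact sudIndex_div_le_Ufix_min_of_stepUp hm hlam hρcont hρmap hg hN h

end Comparison

section DiracUniform

variable {m k : ℕ} {p : Fin m → ℝ}

theorem numLeNull_le (x : ℝ) : numLeNull k p x ≤ k :=
  (Set.ncard_le_ncard_of_injOn Fin.val (t := Iio k) (fun _ hi => hi.1)
    Fin.val_injective.injOn).trans (Set.ncard_Iio_nat k).le

theorem ncard_setOf_le_val : {i : Fin m | k ≤ (i : ℕ)}.ncard = m - k := by
  rw [← Set.ncard_image_of_injective _ Fin.val_injective]
  have : Fin.val '' {i : Fin m | k ≤ (i : ℕ)} = Ico k m := by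
    ext j
    simp only [mem_image, mem_ofPred_eq, mem_Ico]
    exact ⟨fun ⟨i, hi, hij⟩ => hij ▸ ⟨hi, i.isLt⟩, fun ⟨hkj, hjm⟩ => ⟨⟨j, hjm⟩, hkj, rfl⟩⟩
  rw [this, Set.ncard_Ico_nat]

theorem numLe_eq_numLeNull_add (hzero : ∀ i : Fin m, k ≤ (i : ℕ) → p i = 0)
    {x : ℝ} (hx : 0 ≤ x) : numLe p x = numLeNull k p x + (m - k) := by
  have hsplit :
      {i : Fin m | p i ≤ x} = {i : Fin m | (i : ℕ) < k ∧ p i ≤ x} ∪ {i | k ≤ (i : ℕ)} := by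
    ext i
    by_cases hik : k ≤ (i : ℕ)
    · simp [hik, hzero i hik, hx]
    · simp [hik, not_le.mp hik]
  have hdisj : Disjoint {i : Fin m | (i : ℕ) < k ∧ p i ≤ x} {i | k ≤ (i : ℕ)} :=
    Set.disjoint_left.mpr fun _ hi hi' => (not_le.mpr hi.1) hi'
  rw [numLe, hsplit, Set.ncard_union_eq hdisj, ncard_setOf_le_val, numLeNull]

theorem abs_numLe_sub_le {ζ δ ν x : ℝ} (hk : 0 < k) (hkm : k ≤ m) (hζ : 0 < ζ)
    (hzero : ∀ i : Fin m, k ≤ (i : ℕ) → p i = 0) (hx : 0 ≤ x) (hkν : |(k : ℝ) / m - ζ| ≤ ν)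
    (hclose : |(numLeNull k p x : ℝ) / k - x| ≤ ζ⁻¹ * (δ - ν - 1 / m)) :
    |(numLe p x : ℝ) - m * ((1 - ζ) + ζ * x)| ≤ m * δ - 1 := by
  have hm : (0 : ℝ) < m := by exact_mod_cast hk.trans_le hkm
  have hk' : (0 : ℝ) < k := by exact_mod_cast hk
  set F := (numLeNull k p x : ℝ) / k
  have hF : |F - 1| ≤ 1 := by
    have hF1 : F ≤ 1 := div_le_one_of_le₀ (by exact_mod_cast numLeNull_le x) hk'.le
    rw [abs_le]
    constructor <;> linarith [show 0 ≤ F by positivity]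
  -- `Ĝ(x) - x` is weighted by `ζ`, and the mismatch `k/m - ζ` only multiplies `Ĝ(x) - 1`
  have hdecomp : (numLe p x : ℝ) - m * ((1 - ζ) + ζ * x) =
      m * (((k : ℝ) / m - ζ) * (F - 1) + ζ * (F - x)) := by
    rw [numLe_eq_numLeNull_add hzero hx, Nat.cast_add, Nat.cast_sub hkm]
    simp only [F]
    field_simp
    ring
  have h1 : |((k : ℝ) / m - ζ) * (F - 1)| ≤ ν := by
    rw [abs_mul]
    exact (mul_le_of_le_one_right (abs_nonneg _) hF).trans hkν
  have h2 : |ζ * (F - x)| ≤ δ - ν - 1 / m := by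
    rw [abs_mul, abs_of_pos hζ, ← le_inv_mul_iff₀ hζ]
    exact hclose
  rw [hdecomp, abs_mul, abs_of_pos hm]
  calc (m : ℝ) * |((k : ℝ) / m - ζ) * (F - 1) + ζ * (F - x)| ≤ m * (ν + (δ - ν - 1 / m)) :=
        mul_le_mul_of_nonneg_left ((abs_add_le _ _).trans (add_le_add h1 h2)) hm.le
    _ = m * δ - 1 := by field_simp; ring

end DiracUniform

theorem sudIndex_between_uMinus_uPlus_of_close_general
    (m : ℕ)
    (ρ : ℝ → ℝ) (hρcont : ContinuousOn ρ (Set.Icc 0 1))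
    (hρmono : MonotoneOn ρ (Set.Icc 0 1))
    (hρmap : ∀ x ∈ Set.Icc (0:ℝ) 1, ρ x ∈ Set.Icc (0:ℝ) 1)
    (lam : ℕ) (hlam : 1 ≤ lam ∧ lam ≤ m)
    (ζ δ : ℝ) (hζ : ζ ∈ Set.Ioo (0:ℝ) 1)
    (k : ℕ) (hk : 1 ≤ k ∧ k ≤ m)
    (p : Fin m → ℝ)
    (hzero : ∀ i : Fin m, k ≤ (i : ℕ) → p i = 0)
    (ν : ℝ) (hkν : |(k : ℝ) / m - ζ| ≤ ν)
    (hclose : ∀ x ∈ Set.Icc (0:ℝ) 1,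
      |(numLeNull k p x : ℝ) / k - x| ≤ ζ⁻¹ * (δ - ν - 1 / m)) :
    uMinusDU ρ ((lam : ℝ) / m) ζ δ ≤
        (sudIndex lam (fun k' => ρ ((k' : ℝ) / m)) p : ℝ) / m ∧
      (sudIndex lam (fun k' => ρ ((k' : ℝ) / m)) p : ℝ) / m ≤
        uPlusDU ρ ((lam : ℝ) / m) ζ δ := by
  have hm : 0 < m := hk.1.trans hk.2
  have hband (x : ℝ) (hx : x ∈ Icc (0 : ℝ) 1) :=
    abs_le.mp (abs_numLe_sub_le hk.1 hk.2 hζ.1 hzero hx.1 hkν (hclose x hx))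
  have hmono (c : ℝ) : Monotone fun x : ℝ => (1 - ζ) + ζ * x + c := fun x y hxy => by
    dsimp only
    gcongr
    exact hζ.1.le
  constructor
  · exact Ufix_max_le_sudIndex_div hm hlam.2 hρcont hρmono hρmap (by fun_prop)
      (hmono (-δ)) fun x hx => by linarith [(hband x hx).1]
  · exact sudIndex_div_le_Ufix_min hm hlam.2 hρcont hρmono hρmap (by fun_prop)
      (hmono δ) fun x hx => by linarith [(hband x hx).2]

/-- If the p-values beyond the `k`-th one all vanish (Dirac-uniform type realization)
and the empirical c.d.f. `Ĝ_k` of the first `k` p-values is uniformly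
`ζ⁻¹(δ - ν - 1/m)`-close to the identity, then the SUD index satisfies
`u⁻_δ ≤ k̂/m ≤ u⁺_δ`. -/
theorem sudIndex_between_uMinus_uPlus_of_close
    (m : ℕ) (hm : 2 ≤ m)
    (ρ : ℝ → ℝ) (hρcont : ContinuousOn ρ (Set.Icc 0 1))
    (hρmono : MonotoneOn ρ (Set.Icc 0 1))
    (hρmap : ∀ x ∈ Set.Icc (0:ℝ) 1, ρ x ∈ Set.Icc (0:ℝ) 1)
    (lam : ℕ) (hlam : 1 ≤ lam ∧ lam ≤ m)
    (ζ δ : ℝ) (hζ : ζ ∈ Set.Ioo (0:ℝ) 1) (hδ : δ ∈ Set.Ioo (0:ℝ) 1)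
    (k : ℕ) (hk : 1 ≤ k ∧ k ≤ m)
    (p : Fin m → ℝ) (hp : ∀ i, p i ∈ Set.Icc (0:ℝ) 1)
    (hzero : ∀ i : Fin m, k ≤ (i : ℕ) → p i = 0)
    (ν : ℝ) (hν : ν ∈ Set.Icc (0:ℝ) 1) (hkν : |(k : ℝ) / m - ζ| ≤ ν)
    (hclose : ∀ x ∈ Set.Icc (0:ℝ) 1,
      |(numLeNull k p x : ℝ) / k - x| ≤ ζ⁻¹ * (δ - ν - 1 / m)) :
    uMinusDU ρ ((lam : ℝ) / m) ζ δ ≤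
        (sudIndex lam (fun k' => ρ ((k' : ℝ) / m)) p : ℝ) / m ∧
      (sudIndex lam (fun k' => ρ ((k' : ℝ) / m)) p : ℝ) / m ≤
        uPlusDU ρ ((lam : ℝ) / m) ζ δ :=
  sudIndex_between_uMinus_uPlus_of_close_general m ρ hρcont hρmono hρmap lam hlam ζ δ hζ k hk p
    hzero ν hkν hclose
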